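/- Let H₁, …, H_k ⊆ ℝ^n be linear hyperplanes and let H = H₁ ∪ ⋯ ∪ H_k. Let v₁, …, v_k ∈ S^{n-1} be linearly independent unit vectors and C = cone(v₁, …, v_k), and suppose that for all i, j ∈ {1,…,k}: d(vᵢ, Hⱼ) ≥ h > 0 if i = j, and vᵢ ∈ Hⱼ if i ≠ j. Let X be a random point distributed uniformly on C ∩ B^n (with respect to normalized k-dimensional Hausdorff measure). Then E[d(X, H)] ≥ h/(8k²). -/

import Mathlib

open MeasureTheory

noncomputable section

/-- The simplicial cone generated by the vectors `v 0, …, v (k-1)`. -/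
def simplicialCone {n k : ℕ} (v : Fin k → EuclideanSpace ℝ (Fin n)) :
    Set (EuclideanSpace ℝ (Fin n)) :=
  {x | ∃ lam : Fin k → ℝ, (∀ i, 0 ≤ lam i) ∧ x = ∑ i, lam i • v i}

/-- The uniform probability measure on a set `s`, with respect to the
`d`-dimensional Hausdorff measure. -/
def uniformOn {n : ℕ} (d : ℝ) (s : Set (EuclideanSpace ℝ (Fin n))) :
    Measure (EuclideanSpace ℝ (Fin n)) :=
  ((μH[d] : Measure (EuclideanSpace ℝ (Fin n))) s)⁻¹ •
    (μH[d] : Measure (EuclideanSpace ℝ (Fin n))).restrict s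

/-!
Write a point of the cone as `x = ∑ λᵢ vᵢ` with `λᵢ ≥ 0`. Since `vᵢ ∈ Hⱼ` for `i ≠ j`, only the
`j`-th term counts for the distance to `Hⱼ`: `d(x, Hⱼ) = λⱼ d(vⱼ, Hⱼ) ≥ λⱼ h`. The homothety of
ratio `1 - t` centred at `(1/k) ∑ vᵢ` maps the convex set `C ∩ Bⁿ` into itself, onto a set `A` on
which every coefficient is at least `t / k`, so `d(·, H) ≥ t h / k` on `A`; and `A` carries the
fraction `(1 - t)^k` of the `k`-dimensional Hausdorff measure of `C ∩ Bⁿ`. For `t = 1/(2k)`,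
Bernoulli's inequality gives `(1 - t)^k ≥ 1/2`, hence `E[d(X, H)] ≥ h / (4k²)`. The measure of
`C ∩ Bⁿ` is positive and finite because `λ ↦ ∑ λᵢ vᵢ` is an injective linear map, hence
bi-Lipschitz onto its image.
-/

open Metric
open scoped ENNReal Pointwise

section InfDist
variable {ι E : Type*} [Fintype ι] [NormedAddCommGroup E] [NormedSpace ℝ E]

theorem Submodule.infDist_add_of_mem (K : Submodule ℝ E) (y : E) {w : E} (hw : w ∈ K) :
    infDist (y + w) K = infDist y K := by
  rw [infDist, infDist, ← infEDist_vadd w y (K : Set E), vadd_coe_set hw, vadd_eq_add, add_comm]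

theorem Submodule.infDist_smul (K : Submodule ℝ E) (c : ℝ) (y : E) :
    infDist (c • y) K = |c| * infDist y K := by
  rcases eq_or_ne c 0 with rfl | hc
  · simp [infDist_zero_of_mem K.zero_mem]
  · have hK : c • (K : Set E) = K := by
      ext x
      rw [Set.mem_smul_set_iff_inv_smul_mem₀ hc, SetLike.mem_coe, SetLike.mem_coe,
        K.smul_mem_iff (inv_ne_zero hc)]
    rw [← Real.norm_eq_abs, ← infDist_smul₀ hc, hK]

variable {v : ι → E} {H : ι → Submodule ℝ E}

theorem infDist_sum_smul (hmem : ∀ i j, i ≠ j → v i ∈ H j) (c : ι → ℝ) (j : ι) :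
    infDist (∑ i, c i • v i) (H j) = |c j| * infDist (v j) (H j) := by
  classical
  have hrest : ∑ i ∈ Finset.univ.erase j, c i • v i ∈ H j :=
    Submodule.sum_mem _ fun i hi => (H j).smul_mem _ (hmem i j (Finset.ne_of_mem_erase hi))
  rw [← Finset.add_sum_erase _ _ (Finset.mem_univ j), Submodule.infDist_add_of_mem _ _ hrest,
    Submodule.infDist_smul]

theorem mul_le_iInf_infDist_sum_smul [Nonempty ι] (hmem : ∀ i j, i ≠ j → v i ∈ H j) {h : ℝ}
    (hdist : ∀ i, h ≤ infDist (v i) (H i)) {a : ℝ} (ha : 0 ≤ a) {c : ι → ℝ}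
    (hc : ∀ i, a ≤ c i) :
    a * h ≤ ⨅ j, infDist (∑ i, c i • v i) (H j) := by
  refine le_ciInf fun j => ?_
  rw [infDist_sum_smul hmem]
  calc a * h ≤ a * infDist (v j) (H j) := mul_le_mul_of_nonneg_left (hdist j) ha
    _ ≤ |c j| * infDist (v j) (H j) :=
      mul_le_mul_of_nonneg_right ((hc j).trans (le_abs_self _)) infDist_nonneg

end InfDist

section Homothety
variable {ι E : Type*} [Fintype ι] [AddCommGroup E] [Module ℝ E]

theorem homothety_sum_smul (v : ι → E) (a b : ι → ℝ) (r : ℝ) :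
    AffineMap.homothety (∑ i, a i • v i) r (∑ i, b i • v i) =
      ∑ i, (r * b i + (1 - r) * a i) • v i := by
  simp only [AffineMap.homothety_apply, vsub_eq_sub, vadd_eq_add, ← Finset.sum_sub_distrib,
    Finset.smul_sum, ← Finset.sum_add_distrib]
  refine Finset.sum_congr rfl fun i _ => ?_
  module

end Homothety

section LinearImage
variable {ι E : Type*} [Fintype ι] [NormedAddCommGroup E] [NormedSpace ℝ E]
  [MeasurableSpace E] [BorelSpace E]

theorem LinearMap.hausdorffMeasure_image_lt_top (T : (ι → ℝ) →ₗ[ℝ] E) {S : Set (ι → ℝ)}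
    (hS : Bornology.IsBounded S) : μH[Fintype.card ι] (T '' S) < ∞ := by
  calc μH[Fintype.card ι] (T '' S)
      ≤ (‖T.toContinuousLinearMap‖₊ : ℝ≥0∞) ^ (Fintype.card ι : ℝ) * μH[Fintype.card ι] S :=
        T.toContinuousLinearMap.lipschitz.hausdorffMeasure_image_le (by positivity) S
    _ < ∞ := by
      rw [hausdorffMeasure_pi_real]
      exact ENNReal.mul_lt_top (by simp [ENNReal.rpow_natCast]) hS.measure_lt_top

theorem LinearMap.hausdorffMeasure_image_ne_zero (T : (ι → ℝ) →ₗ[ℝ] E)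
    (hT : Function.Injective T) {S : Set (ι → ℝ)} (hS : volume S ≠ 0) :
    μH[Fintype.card ι] (T '' S) ≠ 0 := by
  obtain ⟨K, -, hK⟩ := T.injective_iff_antilipschitz.mp hT
  have := hK.le_hausdorffMeasure_image (Nat.cast_nonneg (Fintype.card ι)) S
  rw [hausdorffMeasure_pi_real] at this
  intro h0
  rw [h0, mul_zero] at this
  exact hS (le_zero_iff.mp this)

end LinearImage

section Cone
variable {n k : ℕ} (v : Fin k → EuclideanSpace ℝ (Fin n))

theorem convex_simplicialCone : Convex ℝ (simplicialCone v) := by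
  rintro _ ⟨c, hc, rfl⟩ _ ⟨d, hd, rfl⟩ a b ha hb -
  refine ⟨a • c + b • d, fun i => add_nonneg (mul_nonneg ha (hc i)) (mul_nonneg hb (hd i)), ?_⟩
  simp only [Finset.smul_sum, Pi.add_apply, Pi.smul_apply, add_smul, smul_assoc,
    Finset.sum_add_distrib]

theorem sum_smul_mem_simplicialCone_inter_closedBall (hv : ∀ i, ‖v i‖ ≤ 1) {c : Fin k → ℝ}
    (hc : ∀ i, c i ∈ Set.Icc 0 (k : ℝ)⁻¹) :
    ∑ i, c i • v i ∈ simplicialCone v ∩ closedBall 0 1 := by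
  refine ⟨⟨c, fun i => (hc i).1, rfl⟩, mem_closedBall_zero_iff.mpr ?_⟩
  calc ‖∑ i, c i • v i‖ ≤ ∑ _i : Fin k, (k : ℝ)⁻¹ := by
        refine (norm_sum_le _ _).trans (Finset.sum_le_sum fun i _ => ?_)
        rw [norm_smul, Real.norm_of_nonneg (hc i).1]
        exact (mul_le_of_le_one_right (hc i).1 (hv i)).trans (hc i).2
    _ ≤ 1 := by simpa using mul_inv_le_one (G₀ := ℝ) (a := k)

theorem homothety_image_simplicialCone_inter_closedBall_subset (hv : ∀ i, ‖v i‖ ≤ 1) {r : ℝ}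
    (hr : r ∈ Set.Icc 0 1) :
    AffineMap.homothety (∑ i, (k : ℝ)⁻¹ • v i) r '' (simplicialCone v ∩ closedBall 0 1) ⊆
      simplicialCone v ∩ closedBall 0 1 := by
  rintro _ ⟨x, hx, rfl⟩
  rw [AffineMap.homothety_eq_lineMap]
  exact ((convex_simplicialCone v).inter (convex_closedBall 0 1)).lineMap_mem
    (sum_smul_mem_simplicialCone_inter_closedBall v hv fun _ => ⟨by positivity, le_rfl⟩) hx hr

theorem div_mul_le_iInf_infDist_homothety [Nonempty (Fin k)]
    {H : Fin k → Submodule ℝ (EuclideanSpace ℝ (Fin n))} (hmem : ∀ i j, i ≠ j → v i ∈ H j)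
    {h : ℝ} (hdist : ∀ i, h ≤ infDist (v i) (H i)) {t : ℝ} (ht : t ∈ Set.Icc 0 1)
    {x : EuclideanSpace ℝ (Fin n)} (hx : x ∈ simplicialCone v) :
    t / k * h ≤ ⨅ j, infDist (AffineMap.homothety (∑ i, (k : ℝ)⁻¹ • v i) (1 - t) x)
      (H j : Set (EuclideanSpace ℝ (Fin n))) := by
  obtain ⟨c, hc, rfl⟩ := hx
  rw [homothety_sum_smul]
  refine mul_le_iInf_infDist_sum_smul hmem hdist (div_nonneg ht.1 k.cast_nonneg) fun i => ?_
  have := mul_nonneg (sub_nonneg.2 ht.2) (hc i)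
  rw [sub_sub_cancel, div_eq_mul_inv]
  linarith

theorem hausdorffMeasure_simplicialCone_inter_closedBall_lt_top (hind : LinearIndependent ℝ v) :
    μH[k] (simplicialCone v ∩ closedBall 0 1) < ∞ := by
  set T := Fintype.linearCombination ℝ v
  obtain ⟨K, -, hK⟩ := T.injective_iff_antilipschitz.mp hind.fintypeLinearCombination_injective
  have hsub : simplicialCone v ∩ closedBall 0 1 ⊆ T '' (T ⁻¹' closedBall 0 1) := by
    rintro _ ⟨⟨c, -, rfl⟩, hx⟩
    refine ⟨c, ?_, Fintype.linearCombination_apply ℝ v c⟩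
    rwa [Set.mem_preimage, Fintype.linearCombination_apply]
  calc μH[k] (simplicialCone v ∩ closedBall 0 1)
      ≤ μH[Fintype.card (Fin k)] (T '' (T ⁻¹' closedBall 0 1)) := by
        rw [Fintype.card_fin]; exact measure_mono hsub
    _ < ∞ := T.hausdorffMeasure_image_lt_top (hK.isBounded_preimage isBounded_closedBall)

theorem hausdorffMeasure_simplicialCone_inter_closedBall_ne_zero (hv : ∀ i, ‖v i‖ ≤ 1)
    (hind : LinearIndependent ℝ v) :
    μH[k] (simplicialCone v ∩ closedBall 0 1) ≠ 0 := by
  set T := Fintype.linearCombination ℝ v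
  set box : Set (Fin k → ℝ) := Set.univ.pi fun _ => Set.Icc 0 (k : ℝ)⁻¹
  have hbox : volume box ≠ 0 := by
    simp only [box, volume_pi_pi, Real.volume_Icc, sub_zero]
    exact Finset.prod_ne_zero_iff.mpr fun i _ => (ENNReal.ofReal_pos.mpr (by
      have := i.pos
      positivity)).ne'
  have hsub : T '' box ⊆ simplicialCone v ∩ closedBall 0 1 := by
    rintro _ ⟨c, hc, rfl⟩
    rw [Fintype.linearCombination_apply]
    exact sum_smul_mem_simplicialCone_inter_closedBall v hv fun i => hc i (Set.mem_univ i)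
  have := T.hausdorffMeasure_image_ne_zero hind.fintypeLinearCombination_injective hbox
  rw [Fintype.card_fin] at this
  exact fun h0 => this (measure_mono_null hsub h0)

end Cone

section Integrability
variable {ι E : Type*} [Finite ι] [Nonempty ι] [NormedAddCommGroup E] [NormedSpace ℝ E]
  [MeasurableSpace E] [BorelSpace E]

theorem integrableOn_iInf_infDist (K : ι → Submodule ℝ E) {μ : Measure E} {s : Set E}
    (hs : μ s ≠ ∞) {R : ℝ} (hsR : s ⊆ closedBall 0 R) :
    IntegrableOn (fun x => ⨅ i, infDist x (K i : Set E)) s μ := by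
  have hmeas : Measurable fun x => ⨅ i, infDist x (K i : Set E) := by fun_prop
  refine Measure.integrableOn_of_bounded (M := R) hs hmeas.aestronglyMeasurable
    (ae_restrict_of_ae_restrict_of_subset hsR
      (ae_restrict_of_forall_mem measurableSet_closedBall fun x hx => ?_))
  obtain ⟨i⟩ := ‹Nonempty ι›
  rw [Real.norm_of_nonneg (Real.iInf_nonneg fun _ => infDist_nonneg)]
  calc ⨅ i, infDist x (K i) ≤ infDist x (K i) :=
        ciInf_le ⟨0, Set.forall_mem_range.2 fun _ => infDist_nonneg⟩ i
    _ ≤ dist x 0 := infDist_le_dist_of_mem (K i).zero_mem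
    _ ≤ R := hx

end Integrability

theorem mul_measureReal_div_le_integral_uniformOn {n : ℕ} {d : ℝ}
    {s A : Set (EuclideanSpace ℝ (Fin n))} {f : EuclideanSpace ℝ (Fin n) → ℝ} {b : ℝ}
    (hs : μH[d] s ≠ ∞) (hf : IntegrableOn f s μH[d]) (hf0 : 0 ≤ f) (hb : 0 ≤ b)
    (hAs : A ⊆ s) (hAf : ∀ x ∈ A, b ≤ f x) :
    b * μH[d].real A / μH[d].real s ≤ ∫ x, f x ∂uniformOn d s := by
  set ν := (μH[d] : Measure (EuclideanSpace ℝ (Fin n))).restrict s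
  have : IsFiniteMeasure ν := isFiniteMeasure_restrict.mpr hs
  have hA : μH[d].real A ≤ ν.real {x | b ≤ f x} :=
    calc μH[d].real A ≤ ν.real A := ENNReal.toReal_mono (measure_ne_top ν A) <| by
          simpa [Set.inter_eq_self_of_subset_left hAs] using Measure.le_restrict_apply s A
      _ ≤ ν.real {x | b ≤ f x} := measureReal_mono hAf
  rw [uniformOn, integral_smul_measure, ENNReal.toReal_inv, smul_eq_mul, mul_div_assoc,
    div_eq_inv_mul, ← measureReal_def, ← mul_assoc, mul_comm b, mul_assoc]
  exact mul_le_mul_of_nonneg_left ((mul_le_mul_of_nonneg_left hA hb).trans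
    (mul_meas_ge_le_integral_of_nonneg (Filter.Eventually.of_forall hf0) hf b)) (by positivity)

theorem one_half_le_one_sub_inv_two_mul_pow (k : ℕ) : 1 / 2 ≤ (1 - 1 / (2 * k : ℝ)) ^ k := by
  rcases k.eq_zero_or_pos with rfl | hk
  · norm_num
  have : 1 / (2 * k : ℝ) ≤ 1 := by
    rw [div_le_one (by positivity)]
    norm_cast
    omega
  calc (1 / 2 : ℝ) = 1 + k * -(1 / (2 * k)) := by field_simp; ring
    _ ≤ (1 + -(1 / (2 * k))) ^ k := one_add_mul_le_pow (by linarith) k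
    _ = (1 - 1 / (2 * k : ℝ)) ^ k := by rw [← sub_eq_add_neg]

theorem statement14_general (n k : ℕ) (hk : 1 ≤ k)
    (H : Fin k → Submodule ℝ (EuclideanSpace ℝ (Fin n)))
    (v : Fin k → EuclideanSpace ℝ (Fin n))
    (hunit : ∀ i, ‖v i‖ = 1) (hind : LinearIndependent ℝ v)
    (h : ℝ) (hpos : 0 < h)
    (hdist : ∀ i, h ≤ Metric.infDist (v i) (H i : Set (EuclideanSpace ℝ (Fin n))))
    (hmem : ∀ i j, i ≠ j → v i ∈ H j) :
    h / (8 * (k : ℝ) ^ 2) ≤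
      ∫ x, (⨅ i, Metric.infDist x (H i : Set (EuclideanSpace ℝ (Fin n))))
        ∂(uniformOn (k : ℝ)
          (simplicialCone v ∩ Metric.closedBall (0 : EuclideanSpace ℝ (Fin n)) 1)) := by
  have : Nonempty (Fin k) := ⟨⟨0, hk⟩⟩
  have hv : ∀ i, ‖v i‖ ≤ 1 := fun i => (hunit i).le
  set s := simplicialCone v ∩ closedBall (0 : EuclideanSpace ℝ (Fin n)) 1
  set t : ℝ := 1 / (2 * k)
  have ht : t ∈ Set.Icc 0 (1 / 2) :=
    ⟨by positivity, one_div_le_one_div_of_le two_pos (by norm_cast; omega)⟩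
  set A := AffineMap.homothety (∑ i, (k : ℝ)⁻¹ • v i) (1 - t) '' s
  have hs_top := hausdorffMeasure_simplicialCone_inter_closedBall_lt_top v hind
  have hs_real : μH[k].real s ≠ 0 := ENNReal.toReal_ne_zero.mpr
    ⟨hausdorffMeasure_simplicialCone_inter_closedBall_ne_zero v hv hind, hs_top.ne⟩
  have hAs : A ⊆ s := homothety_image_simplicialCone_inter_closedBall_subset v hv
    ⟨by linarith [ht.2], by linarith [ht.1]⟩
  have hAf : ∀ x ∈ A, t / k * h ≤ ⨅ j, infDist x (H j : Set (EuclideanSpace ℝ (Fin n))) := by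
    rintro _ ⟨x, hx, rfl⟩
    exact div_mul_le_iInf_infDist_homothety v hmem hdist ⟨ht.1, by linarith [ht.2]⟩ hx.1
  have hAμ : μH[k].real A = (1 - t) ^ k * μH[k].real s := by
    rw [measureReal_def, hausdorffMeasure_homothety_image k.cast_nonneg _
      (by linarith [ht.2] : (1 : ℝ) - t ≠ 0)]
    simp [abs_of_nonneg (by linarith [ht.2] : (0 : ℝ) ≤ 1 - t), measureReal_def]
  have key := mul_measureReal_div_le_integral_uniformOn hs_top.ne
    (integrableOn_iInf_infDist H hs_top.ne Set.inter_subset_right)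
    (fun x => Real.iInf_nonneg fun _ => infDist_nonneg) (by positivity) hAs hAf
  rw [hAμ, mul_div_assoc, mul_div_cancel_right₀ _ hs_real] at key
  calc h / (8 * (k : ℝ) ^ 2) ≤ h / (4 * (k : ℝ) ^ 2) := by gcongr; norm_num
    _ = t / k * h * (1 / 2) := by simp only [t]; field_simp; ring
    _ ≤ t / k * h * (1 - t) ^ k :=
        mul_le_mul_of_nonneg_left (one_half_le_one_sub_inv_two_mul_pow k) (by positivity)
    _ ≤ _ := key

/-- let `H = H₁ ∪ ⋯ ∪ H_k` be a union of linear hyperplanes and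
`C = cone(v₁,…,v_k)` with the `vᵢ` linearly independent unit vectors satisfying
`d(vᵢ, Hᵢ) ≥ h > 0` and `vᵢ ∈ Hⱼ` for `i ≠ j`.  If `X` is uniform on `C ∩ Bⁿ`
(normalized `k`-dimensional Hausdorff measure), then `E[d(X,H)] ≥ h/(8k²)`. -/
theorem statement14 (n k : ℕ) (hk : 1 ≤ k)
    (H : Fin k → Submodule ℝ (EuclideanSpace ℝ (Fin n)))
    (hH : ∀ i, Module.finrank ℝ (H i) = n - 1)
    (v : Fin k → EuclideanSpace ℝ (Fin n))
    (hunit : ∀ i, ‖v i‖ = 1) (hind : LinearIndependent ℝ v)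
    (h : ℝ) (hpos : 0 < h)
    (hdist : ∀ i, h ≤ Metric.infDist (v i) (H i : Set (EuclideanSpace ℝ (Fin n))))
    (hmem : ∀ i j, i ≠ j → v i ∈ H j) :
    h / (8 * (k : ℝ) ^ 2) ≤
      ∫ x, (⨅ i, Metric.infDist x (H i : Set (EuclideanSpace ℝ (Fin n))))
        ∂(uniformOn (k : ℝ)
          (simplicialCone v ∩ Metric.closedBall (0 : EuclideanSpace ℝ (Fin n)) 1)) :=
  statement14_general n k hk H v hunit hind h hpos hdist hmem
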